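/- arXiv:2305.10218 — 2 statements merged into one kernel-verified Lean document; each statement's English description precedes it below -/
import Mathlib

section
/- For any nonnegative function ρ ∈ L^1(ℝ³) ∩ L^{4/3}(ℝ³), the Coulomb double integral satisfies ∬_{ℝ³×ℝ³} ρ(x)ρ(y)/|x−y| dx dy ≤ C ‖ρ‖_{L¹}^{2/3} ‖ρ‖_{L^{4/3}}^{4/3} for some constant C > 0 independent of ρ. -/
/-!
Writing `1 / |x - y| = ∫_{|x - y|}^∞ r⁻² dr`, the Coulomb energy becomes `∫_0^∞ r⁻² I(r) dr`,
where `I(r) = ∫ ρ(x) Φ_r(x) dx` and `Φ_r(x) = ∫_{B(x, r)} ρ` is the mass of the ball of radius `r`.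
Trivially `I(r) ≤ ‖ρ‖₁²`. For small `r`, Hölder gives `Φ_r ≤ ‖ρ‖_{4/3} |B_r|^{1/4}` pointwise and
Fubini gives `‖Φ_r‖₁ = |B_r| ‖ρ‖₁`, so `‖Φ_r‖₄⁴ ≤ ‖Φ_r‖_∞³ ‖Φ_r‖₁`, and a second Hölder inequality
yields `I(r) ≤ ‖ρ‖_{4/3} ‖Φ_r‖₄ ≲ r^{21/16}`, which is integrable against `r⁻²` at `0`.
Splitting the `r`-integral at the radius where the two bounds balance gives the claim.
-/

open MeasureTheory Set Metric ENNReal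

namespace Coulomb

lemma lintegral_Ioi_rpow_neg_two {S : ℝ} (hS : 0 < S) :
    ∫⁻ r in Ioi S, ENNReal.ofReal (r ^ (-2 : ℝ)) = ENNReal.ofReal S⁻¹ := by
  rw [← ofReal_integral_eq_lintegral_ofReal (integrableOn_Ioi_rpow_of_lt (by norm_num) hS)
      ((ae_restrict_iff' measurableSet_Ioi).2 (ae_of_all _
        fun r hr => Real.rpow_nonneg (hS.trans hr).le _)),
    integral_Ioi_rpow_of_lt (by norm_num) hS]
  norm_num [Real.rpow_neg_one]

lemma lintegral_Ioc_rpow {β S : ℝ} (hβ : -1 < β) (hS : 0 ≤ S) :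
    ∫⁻ r in Ioc 0 S, ENNReal.ofReal (r ^ β) = ENNReal.ofReal (S ^ (β + 1) / (β + 1)) := by
  rw [← ofReal_integral_eq_lintegral_ofReal (intervalIntegral.intervalIntegrable_rpow' hβ).1
      ((ae_restrict_iff' measurableSet_Ioc).2 (ae_of_all _ fun r hr => Real.rpow_nonneg hr.1.le _)),
    ← intervalIntegral.integral_of_le hS, integral_rpow (Or.inl hβ),
    Real.zero_rpow (by linarith), sub_zero]

lemma ofReal_inv_le_lintegral_indicator_Ioi (d : ℝ) :
    ENNReal.ofReal d⁻¹ ≤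
      ∫⁻ r in Ioi 0, (Ioi d).indicator (fun r => ENNReal.ofReal (r ^ (-2 : ℝ))) r := by
  rcases le_or_gt d 0 with hd | hd
  · simp [ENNReal.ofReal_of_nonpos (inv_nonpos.2 hd)]
  · rw [lintegral_indicator measurableSet_Ioi, Measure.restrict_restrict measurableSet_Ioi,
      Ioi_inter_Ioi, sup_of_le_left hd.le, lintegral_Ioi_rpow_neg_two hd]

lemma lintegral_Ioi_zero_rpow_neg_two_mul_le {I : ℝ → ℝ≥0∞} {K M : ℝ≥0∞} {α S : ℝ}
    (hα : 1 < α) (hS : 0 < S) (hsmall : ∀ r, 0 < r → I r ≤ K * ENNReal.ofReal (r ^ α))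
    (hlarge : ∀ r, I r ≤ M) :
    ∫⁻ r in Ioi 0, ENNReal.ofReal (r ^ (-2 : ℝ)) * I r ≤
      K * ENNReal.ofReal (S ^ (α - 1) / (α - 1)) + M * ENNReal.ofReal S⁻¹ := by
  rw [← Ioc_union_Ioi_eq_Ioi hS.le, lintegral_union measurableSet_Ioi (Ioc_disjoint_Ioi le_rfl)]
  gcongr
  · calc ∫⁻ r in Ioc 0 S, ENNReal.ofReal (r ^ (-2 : ℝ)) * I r
        ≤ ∫⁻ r in Ioc 0 S, K * ENNReal.ofReal (r ^ (α - 2)) := by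
          refine setLIntegral_mono' measurableSet_Ioc fun r hr => ?_
          calc ENNReal.ofReal (r ^ (-2 : ℝ)) * I r
              ≤ ENNReal.ofReal (r ^ (-2 : ℝ)) * (K * ENNReal.ofReal (r ^ α)) := by
                gcongr
                exact hsmall r hr.1
            _ = K * ENNReal.ofReal (r ^ (α - 2)) := by
                rw [mul_left_comm, ← ENNReal.ofReal_mul (Real.rpow_nonneg hr.1.le _),
                  ← Real.rpow_add hr.1, neg_add_eq_sub]
      _ = K * ENNReal.ofReal (S ^ (α - 1) / (α - 1)) := by
          rw [lintegral_const_mul _ (by fun_prop), lintegral_Ioc_rpow (by linarith) hS.le]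
          norm_num [sub_add]
  · calc ∫⁻ r in Ioi S, ENNReal.ofReal (r ^ (-2 : ℝ)) * I r
        ≤ ∫⁻ r in Ioi S, M * ENNReal.ofReal (r ^ (-2 : ℝ)) :=
          setLIntegral_mono' measurableSet_Ioi fun r _ => by
            rw [mul_comm]
            gcongr
            exact hlarge r
      _ = M * ENNReal.ofReal S⁻¹ := by
          rw [lintegral_const_mul _ (by fun_prop), lintegral_Ioi_rpow_neg_two hS]

lemma ofReal_integral_le_lintegral_ofReal {α : Type*} [MeasurableSpace α] {μ : Measure α}
    {g : α → ℝ} (hg : ∀ x, 0 ≤ g x) :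
    ENNReal.ofReal (∫ x, g x ∂μ) ≤ ∫⁻ x, ENNReal.ofReal (g x) ∂μ :=
  calc ENNReal.ofReal (∫ x, g x ∂μ) = ‖∫ x, g x ∂μ‖ₑ :=
        (Real.enorm_of_nonneg (integral_nonneg hg)).symm
    _ ≤ ∫⁻ x, ‖g x‖ₑ ∂μ := enorm_integral_le_lintegral_enorm _
    _ = ∫⁻ x, ENNReal.ofReal (g x) ∂μ := by simp_rw [Real.enorm_of_nonneg (hg _)]

section BallMass

variable {X : Type*} [PseudoMetricSpace X] [MeasurableSpace X] {μ : Measure X} {f : X → ℝ≥0∞}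

noncomputable def ballMass (μ : Measure X) (f : X → ℝ≥0∞) (r : ℝ) (x : X) : ℝ≥0∞ :=
  ∫⁻ y in ball x r, f y ∂μ

-- `(dist x x)⁻¹ = 0`, matching `ρ x * ρ x / ‖x - x‖ = 0` in the theorem.
noncomputable def coulombEnergy (μ : Measure X) (f : X → ℝ≥0∞) : ℝ≥0∞ :=
  ∫⁻ x, f x * ∫⁻ y, f y * ENNReal.ofReal (dist x y)⁻¹ ∂μ ∂μ

lemma coulombEnergy_eq_zero_of_ae_eq_zero (h : f =ᵐ[μ] 0) : coulombEnergy μ f = 0 :=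
  (lintegral_congr_ae (h.mono fun x hx => by simp [hx])).trans lintegral_zero

lemma measurable_indicator_ball [OpensMeasurableSpace X] [SecondCountableTopology X]
    (hf : Measurable f) :
    Measurable fun q : X × ℝ × X => (ball q.1 q.2.1).indicator f q.2.2 :=
  (hf.comp measurable_snd.snd).indicator (measurableSet_lt (by fun_prop) (by fun_prop))

lemma measurable_ballMass [OpensMeasurableSpace X] [SecondCountableTopology X] [SFinite μ]
    (hf : Measurable f) :
    Measurable (Function.uncurry (ballMass μ f)) := by
  simp_rw [Function.uncurry_def, ballMass, ← lintegral_indicator measurableSet_ball]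
  exact ((measurable_indicator_ball hf).comp
    (f := fun p : (ℝ × X) × X => (p.1.2, p.1.1, p.2)) (by fun_prop)).lintegral_prod_right'

lemma ballMass_le_lintegral_rpow_mul_measure_ball {p q : ℝ} (hpq : p.HolderConjugate q)
    (hf : AEMeasurable f μ) (r : ℝ) (x : X) :
    ballMass μ f r x ≤ (∫⁻ y, f y ^ p ∂μ) ^ (1 / p) * μ (ball x r) ^ (1 / q) := by
  have hp := hpq.pos
  have hq := hpq.symm.pos
  calc ballMass μ f r x = ∫⁻ y in ball x r, f y * 1 ∂μ := by simp [ballMass]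
    _ ≤ (∫⁻ y in ball x r, f y ^ p ∂μ) ^ (1 / p) * (∫⁻ y in ball x r, 1 ^ q ∂μ) ^ (1 / q) :=
      lintegral_mul_le_Lp_mul_Lq _ hpq hf.restrict aemeasurable_const
    _ ≤ (∫⁻ y, f y ^ p ∂μ) ^ (1 / p) * μ (ball x r) ^ (1 / q) := by
      rw [ENNReal.one_rpow, setLIntegral_const, one_mul]
      gcongr
      exact Measure.restrict_le_self

lemma lintegral_ballMass [OpensMeasurableSpace X] [SecondCountableTopology X] [SFinite μ]
    (hf : Measurable f) (r : ℝ) :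
    ∫⁻ x, ballMass μ f r x ∂μ = ∫⁻ y, f y * μ (ball y r) ∂μ := by
  simp_rw [ballMass, ← lintegral_indicator measurableSet_ball]
  rw [lintegral_lintegral_swap (f := fun x y => (ball x r).indicator f y)
    ((measurable_indicator_ball hf).comp (f := fun p : X × X => (p.1, r, p.2))
      (by fun_prop)).aemeasurable]
  congr with y
  have hsymm : ∀ x, (ball x r).indicator f y = (ball y r).indicator (fun _ => f y) x := by
    classical
    simp only [Set.indicator_apply, mem_ball_comm, implies_true]
  simp_rw [hsymm, lintegral_indicator_const measurableSet_ball]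

lemma lintegral_mul_ballMass_le_sq (hf : Measurable f) (r : ℝ) :
    ∫⁻ x, f x * ballMass μ f r x ∂μ ≤ (∫⁻ y, f y ∂μ) ^ 2 :=
  calc ∫⁻ x, f x * ballMass μ f r x ∂μ ≤ ∫⁻ x, f x * ∫⁻ y, f y ∂μ ∂μ :=
        lintegral_mono fun x => mul_le_mul_right (setLIntegral_le_lintegral _ _) _
    _ = (∫⁻ y, f y ∂μ) ^ 2 := by rw [lintegral_mul_const _ hf, sq]

lemma lintegral_mul_ballMass_le_of_measure_ball_eq [OpensMeasurableSpace X]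
    [SecondCountableTopology X] [SFinite μ] (hf : Measurable f) {r : ℝ} {w : ℝ≥0∞}
    (hball : ∀ x, μ (ball x r) = w) :
    ∫⁻ x, f x * ballMass μ f r x ∂μ ≤
      (∫⁻ y, f y ^ (4 / 3 : ℝ) ∂μ) ^ (21 / 16 : ℝ) * (∫⁻ y, f y ∂μ) ^ (1 / 4 : ℝ) *
        w ^ (7 / 16 : ℝ) := by
  set A := ∫⁻ y, f y ∂μ
  set B := ∫⁻ y, f y ^ (4 / 3 : ℝ) ∂μ
  set M := B ^ (3 / 4 : ℝ) * w ^ (1 / 4 : ℝ)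
  have hpq : (4 / 3 : ℝ).HolderConjugate 4 :=
    Real.holderConjugate_iff.2 ⟨by norm_num, by norm_num⟩
  have hΦ : Measurable (ballMass μ f r) :=
    (measurable_ballMass hf).comp (f := fun x => (r, x)) (by fun_prop)
  have hsup : ∀ x, ballMass μ f r x ≤ M := fun x => by
    simpa [M, B, hball] using
      ballMass_le_lintegral_rpow_mul_measure_ball (μ := μ) hpq hf.aemeasurable r x
  have hL4 : ∫⁻ x, ballMass μ f r x ^ (4 : ℝ) ∂μ ≤ M ^ 3 * (w * A) :=
    calc ∫⁻ x, ballMass μ f r x ^ (4 : ℝ) ∂μ ≤ ∫⁻ x, M ^ 3 * ballMass μ f r x ∂μ := by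
          refine lintegral_mono fun x => ?_
          rw [show (4 : ℝ) = (4 : ℕ) by norm_num, ENNReal.rpow_natCast, pow_succ]
          gcongr
          exact hsup x
      _ = M ^ 3 * (w * A) := by
          rw [lintegral_const_mul _ hΦ, lintegral_ballMass hf]
          simp_rw [hball]
          rw [lintegral_mul_const _ hf, mul_comm A]
  have hadd : ∀ (x : ℝ≥0∞) (a b : ℝ), 0 ≤ a → 0 ≤ b → x ^ a * x ^ b = x ^ (a + b) :=
    fun x a b ha hb => (ENNReal.rpow_add_of_nonneg (x := x) a b ha hb).symm
  calc ∫⁻ x, f x * ballMass μ f r x ∂μ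
      ≤ B ^ (1 / (4 / 3) : ℝ) * (∫⁻ x, ballMass μ f r x ^ (4 : ℝ) ∂μ) ^ (1 / 4 : ℝ) :=
        lintegral_mul_le_Lp_mul_Lq μ hpq hf.aemeasurable hΦ.aemeasurable
    _ ≤ B ^ (3 / 4 : ℝ) * (M ^ 3 * (w * A)) ^ (1 / 4 : ℝ) := by
        norm_num only
        gcongr
    _ = B ^ (3 / 4 : ℝ) * B ^ (3 / 4 * (3 : ℕ) * (1 / 4) : ℝ) * A ^ (1 / 4 : ℝ) *
          (w ^ (1 / 4 * (3 : ℕ) * (1 / 4) : ℝ) * w ^ (1 / 4 : ℝ)) := by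
        simp only [M, ENNReal.mul_rpow_of_nonneg _ _ (by norm_num : (0 : ℝ) ≤ 1 / 4),
          ← ENNReal.rpow_natCast, ← ENNReal.rpow_mul, mul_pow]
        ring
    _ = B ^ (21 / 16 : ℝ) * A ^ (1 / 4 : ℝ) * w ^ (7 / 16 : ℝ) := by
        rw [hadd, hadd] <;> norm_num

lemma lintegral_mul_inv_dist_le_lintegral_ballMass [OpensMeasurableSpace X]
    [SecondCountableTopology X] [SFinite μ] (hf : Measurable f) (x : X) :
    ∫⁻ y, f y * ENNReal.ofReal (dist x y)⁻¹ ∂μ ≤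
      ∫⁻ r in Ioi 0, ENNReal.ofReal (r ^ (-2 : ℝ)) * ballMass μ f r x := by
  set K : ℝ → ℝ≥0∞ := fun r => ENNReal.ofReal (r ^ (-2 : ℝ))
  have hK : Measurable K := by fun_prop
  have hsplit : ∀ y r,
      K r * (ball x r).indicator f y = (Ioi (dist y x)).indicator K r * f y := by
    classical
    intro y r
    simp only [Set.indicator_apply, Metric.mem_ball, mem_Ioi]
    split_ifs <;> simp
  calc ∫⁻ y, f y * ENNReal.ofReal (dist x y)⁻¹ ∂μ
      ≤ ∫⁻ y, (∫⁻ r in Ioi (0 : ℝ), K r * (ball x r).indicator f y) ∂μ := by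
        refine lintegral_mono fun y => ?_
        simp_rw [hsplit y, lintegral_mul_const _ (hK.indicator measurableSet_Ioi),
          mul_comm (f y), dist_comm x y]
        gcongr
        exact ofReal_inv_le_lintegral_indicator_Ioi _
    _ = ∫⁻ r in Ioi 0, ∫⁻ y, K r * (ball x r).indicator f y ∂μ :=
        lintegral_lintegral_swap ((hK.comp measurable_snd).mul
          ((measurable_indicator_ball hf).comp (f := fun p : X × ℝ => (x, p.2, p.1))
            (by fun_prop))).aemeasurable
    _ = ∫⁻ r in Ioi (0 : ℝ), K r * ballMass μ f r x := by
        congr with r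
        rw [ballMass, ← lintegral_indicator measurableSet_ball,
          lintegral_const_mul' _ _ ofReal_ne_top]

lemma coulombEnergy_le_lintegral_ballMass [OpensMeasurableSpace X] [SecondCountableTopology X]
    [SFinite μ] (hf : Measurable f) :
    coulombEnergy μ f ≤
      ∫⁻ r in Ioi 0, ENNReal.ofReal (r ^ (-2 : ℝ)) * ∫⁻ x, f x * ballMass μ f r x ∂μ := by
  set K : ℝ → ℝ≥0∞ := fun r => ENNReal.ofReal (r ^ (-2 : ℝ))
  have hK : Measurable K := by fun_prop
  have hΦ := measurable_ballMass (μ := μ) hf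
  calc coulombEnergy μ f
      ≤ ∫⁻ x, (∫⁻ r in Ioi (0 : ℝ), f x * (K r * ballMass μ f r x)) ∂μ := by
        refine lintegral_mono fun x => ?_
        have hm : Measurable fun r => K r * ballMass μ f r x :=
          hK.mul (hΦ.comp (f := fun r => (r, x)) (by fun_prop))
        rw [lintegral_const_mul _ hm]
        gcongr
        exact lintegral_mul_inv_dist_le_lintegral_ballMass hf x
    _ = ∫⁻ r in Ioi (0 : ℝ), ∫⁻ x, f x * (K r * ballMass μ f r x) ∂μ :=
        lintegral_lintegral_swap ((hf.comp measurable_fst).mul ((hK.comp measurable_snd).mul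
          (hΦ.comp (f := fun p : X × ℝ => (p.2, p.1)) (by fun_prop)))).aemeasurable
    _ = ∫⁻ r in Ioi (0 : ℝ), K r * ∫⁻ x, f x * ballMass μ f r x ∂μ := by
        congr with r
        simp_rw [mul_left_comm (f _)]
        exact lintegral_const_mul' _ _ ofReal_ne_top

end BallMass

lemma ofReal_integral_integral_le_coulombEnergy {E : Type*} [NormedAddCommGroup E]
    [MeasurableSpace E] {μ : Measure E} {ρ : E → ℝ} (hρ : ∀ x, 0 ≤ ρ x) :
    ENNReal.ofReal (∫ x, ∫ y, ρ x * ρ y / ‖x - y‖ ∂μ ∂μ) ≤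
      coulombEnergy μ fun x => ENNReal.ofReal (ρ x) :=
  calc ENNReal.ofReal (∫ x, ∫ y, ρ x * ρ y / ‖x - y‖ ∂μ ∂μ)
      ≤ ∫⁻ x, ENNReal.ofReal (∫ y, ρ x * ρ y / ‖x - y‖ ∂μ) ∂μ :=
        ofReal_integral_le_lintegral_ofReal fun x => integral_nonneg fun y => by
          have := hρ x; have := hρ y; positivity
    _ ≤ ∫⁻ x, ∫⁻ y, ENNReal.ofReal (ρ x * ρ y / ‖x - y‖) ∂μ ∂μ :=
        lintegral_mono fun x => ofReal_integral_le_lintegral_ofReal fun y => by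
          have := hρ x; have := hρ y; positivity
    _ = _ := by
        congr with x
        rw [← lintegral_const_mul' _ _ ofReal_ne_top]
        congr with y
        rw [dist_eq_norm, div_eq_mul_inv, mul_assoc, ENNReal.ofReal_mul (hρ x),
          ENNReal.ofReal_mul (hρ y)]

-- `π * 4 / 3` is the volume of the unit ball of `ℝ³`, and `16 / 5 = 1 / (21 / 16 - 1)`.
noncomputable def coulombConst : ℝ := 16 / 5 * (Real.pi * 4 / 3) ^ (7 / 16 : ℝ) + 1

lemma coulombConst_pos : 0 < coulombConst := by
  unfold coulombConst
  positivity

-- Splitting the radial integral at `S = a ^ (4 / 3) / b` balances the two bounds.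
lemma split_bound_at_optimal_radius {a b c : ℝ} (ha : 0 < a) (hb : 0 < b) :
    b ^ (21 / 16 : ℝ) * a ^ (1 / 4 : ℝ) * c *
        ((a ^ (4 / 3 : ℝ) / b) ^ (21 / 16 - 1 : ℝ) / (21 / 16 - 1)) +
      a ^ 2 * (a ^ (4 / 3 : ℝ) / b)⁻¹ = (16 / 5 * c + 1) * a ^ (2 / 3 : ℝ) * b := by
  have hS : (a ^ (4 / 3 : ℝ) / b) ^ (21 / 16 - 1 : ℝ) = a ^ (5 / 12 : ℝ) / b ^ (5 / 16 : ℝ) := by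
    rw [Real.div_rpow (by positivity) hb.le, ← Real.rpow_mul ha.le]
    norm_num
  have hb' : b ^ (21 / 16 : ℝ) = b ^ (5 / 16 : ℝ) * b := by
    rw [← Real.rpow_add_one hb.ne']
    norm_num
  have ha' : a ^ (2 / 3 : ℝ) = a ^ (1 / 4 : ℝ) * a ^ (5 / 12 : ℝ) := by
    rw [← Real.rpow_add ha]
    norm_num
  have ha2 : a ^ 2 = a ^ (2 / 3 : ℝ) * a ^ (4 / 3 : ℝ) := by
    rw [← Real.rpow_add ha, ← Real.rpow_natCast]
    norm_num
  rw [hS, hb', ha2, ha']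
  field_simp
  ring

lemma lintegral_mul_ballMass_le_euclideanSpace_fin_three
    {f : EuclideanSpace ℝ (Fin 3) → ℝ≥0∞} (hf : Measurable f) {r : ℝ} (hr : 0 < r) :
    ∫⁻ x, f x * ballMass volume f r x ≤
      (∫⁻ x, f x ^ (4 / 3 : ℝ)) ^ (21 / 16 : ℝ) * (∫⁻ x, f x) ^ (1 / 4 : ℝ) *
        ENNReal.ofReal ((Real.pi * 4 / 3) ^ (7 / 16 : ℝ)) * ENNReal.ofReal (r ^ (21 / 16 : ℝ)) := by
  refine (lintegral_mul_ballMass_le_of_measure_ball_eq hf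
    fun x => EuclideanSpace.volume_ball_fin_three x r).trans_eq ?_
  rw [mul_assoc, ← ENNReal.ofReal_pow hr.le, ← ENNReal.ofReal_mul (by positivity),
    ENNReal.ofReal_rpow_of_nonneg (by positivity) (by norm_num),
    Real.mul_rpow (by positivity) (by positivity), ← Real.rpow_natCast, ← Real.rpow_mul hr.le,
    ENNReal.ofReal_mul (by positivity), mul_comm (ENNReal.ofReal (r ^ _))]
  norm_num [mul_assoc]

lemma coulombEnergy_le_euclideanSpace_fin_three {f : EuclideanSpace ℝ (Fin 3) → ℝ≥0∞}
    (hf : Measurable f) (hA : ∫⁻ x, f x ≠ ∞) (hB : ∫⁻ x, f x ^ (4 / 3 : ℝ) ≠ ∞) :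
    coulombEnergy volume f ≤
      ENNReal.ofReal (coulombConst * (∫⁻ x, f x).toReal ^ (2 / 3 : ℝ) *
        (∫⁻ x, f x ^ (4 / 3 : ℝ)).toReal) := by
  set A := ∫⁻ x, f x
  set B := ∫⁻ x, f x ^ (4 / 3 : ℝ)
  set a := A.toReal
  set b := B.toReal
  by_cases hdeg : A = 0 ∨ B = 0
  · have hf0 : f =ᵐ[volume] 0 := hdeg.elim (lintegral_eq_zero_iff hf).1
      (ae_eq_zero_of_lintegral_rpow_eq_zero (by norm_num) hf.aemeasurable)
    simp [coulombEnergy_eq_zero_of_ae_eq_zero hf0]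
  rw [not_or] at hdeg
  have ha : 0 < a := toReal_pos hdeg.1 hA
  have hb : 0 < b := toReal_pos hdeg.2 hB
  calc coulombEnergy volume f
      ≤ ∫⁻ r in Ioi 0, ENNReal.ofReal (r ^ (-2 : ℝ)) * ∫⁻ x, f x * ballMass volume f r x :=
        coulombEnergy_le_lintegral_ballMass hf
    _ ≤ B ^ (21 / 16 : ℝ) * A ^ (1 / 4 : ℝ) * ENNReal.ofReal ((Real.pi * 4 / 3) ^ (7 / 16 : ℝ)) *
          ENNReal.ofReal ((a ^ (4 / 3 : ℝ) / b) ^ (21 / 16 - 1 : ℝ) / (21 / 16 - 1)) +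
        A ^ 2 * ENNReal.ofReal (a ^ (4 / 3 : ℝ) / b)⁻¹ :=
        lintegral_Ioi_zero_rpow_neg_two_mul_le (by norm_num) (by positivity)
          (fun r hr => lintegral_mul_ballMass_le_euclideanSpace_fin_three hf hr)
          (lintegral_mul_ballMass_le_sq hf)
    _ = ENNReal.ofReal (coulombConst * a ^ (2 / 3 : ℝ) * b) := by
        rw [coulombConst, ← split_bound_at_optimal_radius ha hb, ← ofReal_toReal hA,
          ← ofReal_toReal hB, ENNReal.ofReal_add (by positivity) (by positivity),
          ENNReal.ofReal_mul (by positivity), ENNReal.ofReal_mul (by positivity),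
          ENNReal.ofReal_mul (by positivity), ENNReal.ofReal_mul (by positivity),
          ENNReal.ofReal_pow ha.le, ENNReal.ofReal_rpow_of_nonneg hb.le (by norm_num),
          ENNReal.ofReal_rpow_of_nonneg ha.le (by norm_num)]

end Coulomb

theorem stmt_0 :
    ∃ C : ℝ, 0 < C ∧
      ∀ ρ : EuclideanSpace ℝ (Fin 3) → ℝ,
        Measurable ρ → (∀ x, 0 ≤ ρ x) →
        Integrable ρ →
        MemLp ρ (ENNReal.ofReal (4 / 3)) →
        ∫ x, ∫ y, ρ x * ρ y / ‖x - y‖ ≤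
          C * (∫ x, ρ x) ^ ((2 : ℝ) / 3) * (∫ x, ρ x ^ ((4 : ℝ) / 3)) := by
  refine ⟨Coulomb.coulombConst, Coulomb.coulombConst_pos, fun ρ hρ hρ0 hint hmem => ?_⟩
  have hint' : Integrable fun x => ρ x ^ (4 / 3 : ℝ) := by
    have h := hmem.integrable_norm_rpow (by simp) ENNReal.ofReal_ne_top
    rw [ENNReal.toReal_ofReal (by norm_num)] at h
    simpa [Real.norm_eq_abs, abs_of_nonneg (hρ0 _)] using h
  have hρ43 : ∀ x, 0 ≤ ρ x ^ (4 / 3 : ℝ) := fun x => Real.rpow_nonneg (hρ0 x) _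
  have hA : ∫⁻ x, ENNReal.ofReal (ρ x) = ENNReal.ofReal (∫ x, ρ x) :=
    (ofReal_integral_eq_lintegral_ofReal hint (ae_of_all _ hρ0)).symm
  have hB : ∫⁻ x, ENNReal.ofReal (ρ x) ^ (4 / 3 : ℝ) =
      ENNReal.ofReal (∫ x, ρ x ^ (4 / 3 : ℝ)) := by
    simp_rw [ENNReal.ofReal_rpow_of_nonneg (hρ0 _) (by norm_num : (0 : ℝ) ≤ 4 / 3)]
    exact (ofReal_integral_eq_lintegral_ofReal hint' (ae_of_all _ hρ43)).symm
  have ha : 0 ≤ ∫ x, ρ x := integral_nonneg hρ0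
  have hb : 0 ≤ ∫ x, ρ x ^ (4 / 3 : ℝ) := integral_nonneg hρ43
  have hbound := Coulomb.coulombEnergy_le_euclideanSpace_fin_three hρ.ennreal_ofReal
    (hA ▸ ENNReal.ofReal_ne_top) (hB ▸ ENNReal.ofReal_ne_top)
  rw [hA, hB, ENNReal.toReal_ofReal ha, ENNReal.toReal_ofReal hb] at hbound
  have hC := Coulomb.coulombConst_pos
  exact (ENNReal.ofReal_le_ofReal_iff (by positivity)).1
    ((Coulomb.ofReal_integral_integral_le_coulombEnergy hρ0).trans hbound)
end

section
/- Let γ ∈ (6/5, 4/3). If ρ is nonnegative with Q(ρ) > 0 (where Q(ρ) = 3K∫ρ^γ − (1/2)∬ρ(x)ρ(y)/|x−y|), and l_μ ∈ ℝ denotes the infimum of S_μ over {Q = 0}, then Q(ρ) ≥ (l_μ − S_μ(ρ))/(λ*(ρ) − 1), where λ*(ρ) = (6K∫ρ^γ / ∬ρ(x)ρ(y)/|x−y|)^{1/(4−3γ)} > 1. -/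
open MeasureTheory Module Set
open Function (support)

/-! The mass-preserving dilation `ρ_λ x = λ³ ρ (λ x)` multiplies `∫ ρ^γ` by `λ^(3γ-3)` and the
Coulomb energy by `λ`, so `λ*(ρ)` is exactly the scale at which `Q (ρ_λ) = 0`, whence
`l_μ ≤ S (ρ_{λ*})`. As `0 < 3γ - 3 < 1`, the map `λ ↦ S (ρ_λ)` is concave with derivative `Q ρ`
at `λ = 1`, so it lies below its tangent there: `S (ρ_{λ*}) ≤ S ρ + (λ* - 1) Q ρ`. -/

namespace MeasureTheory.Measure

theorem prod_diagonal_eq_zero {α : Type*} [MeasurableSpace α] [MeasurableEq α]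
    (μ ν : Measure α) [SFinite ν] [NullSingletonClass ν] : μ.prod ν (diagonal α) = 0 := by
  have hslice : ∀ x, Prod.mk x ⁻¹' diagonal α = {x} := fun x => by ext y; simp [eq_comm]
  simp [Measure.prod_apply measurableSet_diagonal, hslice]

end MeasureTheory.Measure

theorem measure_support_ne_zero_of_integral_rpow_ne_zero {α : Type*} [MeasurableSpace α]
    {μ : Measure α} {ρ : α → ℝ} {γ : ℝ} (hγ : γ ≠ 0) (h : ∫ x, ρ x ^ γ ∂μ ≠ 0) :
    μ (support ρ) ≠ 0 := by
  contrapose! h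
  refine integral_eq_zero_of_ae ?_
  filter_upwards [(Measure.measure_support_eq_zero_iff μ).1 h] with x hx
  simp [hx, Real.zero_rpow hγ]

theorem integral_integral_mul_div_norm_pos {E : Type*} [NormedAddCommGroup E] [MeasurableSpace E]
    [MeasurableEq E] (μ : Measure E) [SFinite μ] [NullSingletonClass μ] {ρ : E → ℝ}
    (hρ : ∀ x, 0 ≤ ρ x) (hsupp : μ (support ρ) ≠ 0)
    (hint : Integrable (fun p : E × E => ρ p.1 * ρ p.2 / ‖p.1 - p.2‖) (μ.prod μ)) :
    0 < ∫ x, ∫ y, ρ x * ρ y / ‖x - y‖ ∂μ ∂μ := by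
  rw [integral_integral hint]
  refine (integral_pos_iff_support_of_nonneg
    (fun p => div_nonneg (mul_nonneg (hρ _) (hρ _)) (norm_nonneg _)) hint).2 ?_
  have hsub : (support ρ ×ˢ support ρ) \ diagonal E ⊆
      support (fun p : E × E => ρ p.1 * ρ p.2 / ‖p.1 - p.2‖) := by
    rintro ⟨x, y⟩ ⟨⟨hx, hy⟩, hxy⟩
    exact div_ne_zero (mul_ne_zero hx hy) (norm_ne_zero_iff.2 (sub_ne_zero.2 hxy))
  calc 0 < μ.prod μ (support ρ ×ˢ support ρ) := by
        rw [Measure.prod_prod]; exact pos_iff_ne_zero.2 (mul_ne_zero hsupp hsupp)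
    _ = μ.prod μ ((support ρ ×ˢ support ρ) \ diagonal E) :=
        (measure_sdiff_null (Measure.prod_diagonal_eq_zero μ μ)).symm
    _ ≤ _ := measure_mono hsub

section Dilation

variable {E : Type*} [NormedAddCommGroup E] [NormedSpace ℝ E]

noncomputable def massDilation (l : ℝ) (ρ : E → ℝ) (x : E) : ℝ := l ^ finrank ℝ E * ρ (l • x)

theorem massDilation_nonneg {l : ℝ} (hl : 0 ≤ l) {ρ : E → ℝ} (hρ : ∀ x, 0 ≤ ρ x) (x : E) :
    0 ≤ massDilation l ρ x :=
  mul_nonneg (pow_nonneg hl _) (hρ _)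

variable [FiniteDimensional ℝ E] [MeasurableSpace E] [BorelSpace E] (μ : Measure E)
  [μ.IsAddHaarMeasure]

theorem integral_massDilation {l : ℝ} (hl : 0 < l) (ρ : E → ℝ) :
    ∫ x, massDilation l ρ x ∂μ = ∫ x, ρ x ∂μ := by
  simp only [massDilation]
  rw [integral_const_mul, Measure.integral_comp_smul_of_nonneg μ ρ l (hR := hl.le),
    smul_eq_mul, mul_inv_cancel_left₀ (by positivity)]

theorem integral_massDilation_rpow {l : ℝ} (hl : 0 < l) {ρ : E → ℝ} (hρ : ∀ x, 0 ≤ ρ x) (γ : ℝ) :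
    ∫ x, massDilation l ρ x ^ γ ∂μ = l ^ ((finrank ℝ E : ℝ) * (γ - 1)) * ∫ x, ρ x ^ γ ∂μ := by
  have hpt : ∀ x, massDilation l ρ x ^ γ = (l ^ finrank ℝ E) ^ γ * ρ (l • x) ^ γ :=
    fun x => Real.mul_rpow (by positivity) (hρ _)
  simp_rw [hpt]
  rw [integral_const_mul,
    Measure.integral_comp_smul_of_nonneg μ (fun x => ρ x ^ γ) l (hR := hl.le), smul_eq_mul,
    ← mul_assoc, ← Real.rpow_natCast, ← Real.rpow_mul hl.le, ← Real.rpow_neg hl.le,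
    ← Real.rpow_add hl]
  ring_nf

theorem integral_integral_massDilation_div_norm {l : ℝ} (hl : 0 < l) (ρ : E → ℝ) :
    ∫ x, ∫ y, massDilation l ρ x * massDilation l ρ y / ‖x - y‖ ∂μ ∂μ =
      l * ∫ x, ∫ y, ρ x * ρ y / ‖x - y‖ ∂μ ∂μ := by
  set n := finrank ℝ E
  have hpt : ∀ x y, massDilation l ρ x * massDilation l ρ y / ‖x - y‖ =
      l ^ (2 * n + 1) * (ρ (l • x) * ρ (l • y) / ‖l • x - l • y‖) := by
    intro x y
    rw [← smul_sub, norm_smul, Real.norm_of_nonneg hl.le, massDilation, massDilation]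
    rcases eq_or_ne ‖x - y‖ 0 with h | h
    · simp [h]
    · field_simp
      ring
  have hinner : ∀ x, ∫ y, ρ (l • x) * ρ (l • y) / ‖l • x - l • y‖ ∂μ =
      (l ^ n)⁻¹ * ∫ y, ρ (l • x) * ρ y / ‖l • x - y‖ ∂μ := fun x =>
    Measure.integral_comp_smul_of_nonneg μ (fun y => ρ (l • x) * ρ y / ‖l • x - y‖) l (hR := hl.le)
  simp_rw [hpt, integral_const_mul, hinner, integral_const_mul]
  rw [Measure.integral_comp_smul_of_nonneg μ (fun u => ∫ y, ρ u * ρ y / ‖u - y‖ ∂μ) l (hR := hl.le),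
    smul_eq_mul]
  field_simp
  ring

end Dilation

theorem virial_eq_zero_of_eq_rpow {K γ A B l : ℝ} (hγ : 3 * γ ≠ 4) (hK : 0 < K) (hA : 0 < A)
    (hB : 0 < B) (hl : l = (6 * K * A / B) ^ (1 / (4 - 3 * γ))) :
    3 * K * (l ^ (3 * (γ - 1)) * A) - 1 / 2 * (l * B) = 0 := by
  have hbase : 0 < 6 * K * A / B := by positivity
  have hl0 : 0 < l := hl ▸ Real.rpow_pos_of_pos hbase _
  have hpow : l ^ (3 * γ - 4) = B / (6 * K * A) := by
    have hexp : 1 / (4 - 3 * γ) * (3 * γ - 4) = -1 := by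
      field_simp [sub_ne_zero.2 hγ.symm]
      ring
    rw [hl, ← Real.rpow_mul hbase.le, hexp, Real.rpow_neg_one, inv_div]
  rw [show 3 * (γ - 1) = 1 + (3 * γ - 4) by ring, Real.rpow_add hl0, Real.rpow_one, hpow]
  field_simp
  ring

theorem energy_scaling_le_tangent {d K γ c A B M l : ℝ} (hK : 0 ≤ K) (hγ : 1 < γ) (hd : 0 ≤ d)
    (hdγ : d * (γ - 1) ≤ 1) (hA : 0 ≤ A) (hl : 0 ≤ l) :
    K / (γ - 1) * (l ^ (d * (γ - 1)) * A) - 1 / 2 * (l * B) - c * M ≤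
      K / (γ - 1) * A - 1 / 2 * B - c * M + (l - 1) * (d * K * A - 1 / 2 * B) := by
  have hbernoulli : l ^ (d * (γ - 1)) ≤ 1 + d * (γ - 1) * (l - 1) := by
    simpa using rpow_one_add_le_one_add_mul_self (s := l - 1) (by linarith)
      (mul_nonneg hd (by linarith)) hdγ
  have hcoef : 0 ≤ K / (γ - 1) * A := by positivity
  have hderiv : (l - 1) * (d * K * A) = K / (γ - 1) * A * (d * (γ - 1) * (l - 1)) := by
    field_simp [(by linarith : γ - 1 ≠ 0)]
  linarith [mul_le_mul_of_nonneg_left hbernoulli hcoef]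

theorem stmt_8_general (γ K c lμ : ℝ) (hγ1 : 6 / 5 < γ) (hγ2 : γ < 4 / 3) (hK : 0 < K)
    (Q S : (EuclideanSpace ℝ (Fin 3) → ℝ) → ℝ)
    (hQ : ∀ ϱ : EuclideanSpace ℝ (Fin 3) → ℝ,
      Q ϱ = 3 * K * (∫ x, ϱ x ^ γ) - (1 / 2) * ∫ x, ∫ y, ϱ x * ϱ y / ‖x - y‖)
    (hS : ∀ ϱ : EuclideanSpace ℝ (Fin 3) → ℝ,
      S ϱ = (K / (γ - 1)) * (∫ x, ϱ x ^ γ) -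
        (1 / 2) * (∫ x, ∫ y, ϱ x * ϱ y / ‖x - y‖) - c * (∫ x, ϱ x))
    (hlμ : ∀ ϱ : EuclideanSpace ℝ (Fin 3) → ℝ,
      (∀ x, 0 ≤ ϱ x) → Q ϱ = 0 → lμ ≤ S ϱ)
    (ρ : EuclideanSpace ℝ (Fin 3) → ℝ)
    (hpos : ∀ x, 0 ≤ ρ x)
    (hIγpos : 0 < ∫ x, ρ x ^ γ)
    (hprod : Integrable
      (fun p : EuclideanSpace ℝ (Fin 3) × EuclideanSpace ℝ (Fin 3) =>
        ρ p.1 * ρ p.2 / ‖p.1 - p.2‖) (volume.prod volume))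
    (hQρ : 0 < Q ρ)
    (lstar : ℝ)
    (hls : lstar = (6 * K * (∫ x, ρ x ^ γ) /
      (∫ x, ∫ y, ρ x * ρ y / ‖x - y‖)) ^ (1 / (4 - 3 * γ))) :
    1 < lstar ∧ (lμ - S ρ) / (lstar - 1) ≤ Q ρ := by
  set A := ∫ x, ρ x ^ γ
  set B := ∫ x, ∫ y, ρ x * ρ y / ‖x - y‖
  have hB : 0 < B := integral_integral_mul_div_norm_pos volume hpos
    (measure_support_ne_zero_of_integral_rpow_ne_zero (by linarith) hIγpos.ne') hprod
  have hBA : B < 6 * K * A := by linarith [hQ ρ]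
  have hl1 : 1 < lstar :=
    hls ▸ Real.one_lt_rpow ((one_lt_div hB).2 hBA) (one_div_pos.2 (by linarith))
  have hl0 : 0 < lstar := one_pos.trans hl1
  set σ := massDilation lstar ρ
  have hAσ : ∫ x, σ x ^ γ = lstar ^ (3 * (γ - 1)) * A := by
    simpa using integral_massDilation_rpow volume hl0 hpos γ
  have hBσ := integral_integral_massDilation_div_norm volume hl0 ρ
  have hQσ : Q σ = 0 := by
    rw [hQ, hAσ, hBσ]
    exact virial_eq_zero_of_eq_rpow (by linarith) hK hIγpos hB hls
  have hSσ : S σ ≤ S ρ + (lstar - 1) * Q ρ := by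
    rw [hS, hS, hQ, hAσ, hBσ, integral_massDilation volume hl0]
    exact energy_scaling_le_tangent hK.le (by linarith) (by norm_num) (by linarith) hIγpos.le hl0.le
  refine ⟨hl1, ?_⟩
  rw [div_le_iff₀ (sub_pos.2 hl1)]
  linarith [hlμ σ (massDilation_nonneg hl0.le hpos) hQσ]

theorem stmt_8 (γ K c lμ : ℝ) (hγ1 : 6 / 5 < γ) (hγ2 : γ < 4 / 3) (hK : 0 < K)
    (Q S : (EuclideanSpace ℝ (Fin 3) → ℝ) → ℝ)
    (hQ : ∀ ϱ : EuclideanSpace ℝ (Fin 3) → ℝ,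
      Q ϱ = 3 * K * (∫ x, ϱ x ^ γ) - (1 / 2) * ∫ x, ∫ y, ϱ x * ϱ y / ‖x - y‖)
    (hS : ∀ ϱ : EuclideanSpace ℝ (Fin 3) → ℝ,
      S ϱ = (K / (γ - 1)) * (∫ x, ϱ x ^ γ) -
        (1 / 2) * (∫ x, ∫ y, ϱ x * ϱ y / ‖x - y‖) - c * (∫ x, ϱ x))
    (hlμ : ∀ ϱ : EuclideanSpace ℝ (Fin 3) → ℝ,
      (∀ x, 0 ≤ ϱ x) → Q ϱ = 0 → lμ ≤ S ϱ)
    (ρ : EuclideanSpace ℝ (Fin 3) → ℝ)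
    (hmeas : Measurable ρ) (hpos : ∀ x, 0 ≤ ρ x)
    (hInt : Integrable ρ)
    (hIγ : Integrable (fun x => ρ x ^ γ)) (hIγpos : 0 < ∫ x, ρ x ^ γ)
    (hprod : Integrable
      (fun p : EuclideanSpace ℝ (Fin 3) × EuclideanSpace ℝ (Fin 3) =>
        ρ p.1 * ρ p.2 / ‖p.1 - p.2‖) (volume.prod volume))
    (hQρ : 0 < Q ρ)
    (lstar : ℝ)
    (hls : lstar = (6 * K * (∫ x, ρ x ^ γ) /
      (∫ x, ∫ y, ρ x * ρ y / ‖x - y‖)) ^ (1 / (4 - 3 * γ))) :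
    1 < lstar ∧ (lμ - S ρ) / (lstar - 1) ≤ Q ρ :=
  stmt_8_general γ K c lμ hγ1 hγ2 hK Q S hQ hS hlμ ρ hpos hIγpos hprod hQρ lstar hls
end
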